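/- (Orthogonality of r-Stirling numbers) For integers n ≥ r ≥ 0 and any integer m, ∑_{k} (-1)^{n-k} s_r(n,k) · S_r(k,m) = δ_{m,n}, where s_r and S_r are the unsigned r-Stirling numbers of the first and second kind respectively. -/

import Mathlib

open Finset

/-- Unsigned Stirling numbers of the first kind. -/
def stirling1 : ℕ → ℕ → ℕ
  | 0, 0 => 1
  | 0, _ + 1 => 0
  | _ + 1, 0 => 0
  | n + 1, k + 1 => n * stirling1 n (k + 1) + stirling1 n k

/-- Stirling numbers of the second kind. -/
def stirling2 : ℕ → ℕ → ℕ
  | 0, 0 => 1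
  | 0, _ + 1 => 0
  | _ + 1, 0 => 0
  | n + 1, k + 1 => (k + 1) * stirling2 n (k + 1) + stirling2 n k

/-- Unsigned r-Stirling numbers of the first kind. -/
def rStirling1 (r : ℕ) : ℕ → ℕ → ℕ
  | 0, m => if r = 0 ∧ m = 0 then 1 else 0
  | n + 1, m =>
    if n + 1 < r then 0
    else if n + 1 = r then (if m = r then 1 else 0)
    else n * rStirling1 r n m + (match m with | 0 => 0 | m' + 1 => rStirling1 r n m')

/-- r-Stirling numbers of the second kind. -/
def rStirling2 (r : ℕ) : ℕ → ℕ → ℕ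
  | 0, m => if r = 0 ∧ m = 0 then 1 else 0
  | n + 1, m =>
    if n + 1 < r then 0
    else if n + 1 = r then (if m = r then 1 else 0)
    else m * rStirling2 r n m + (match m with | 0 => 0 | m' + 1 => rStirling2 r n m')

/-- Poly-Cauchy numbers of the first kind `c_n^{(k)}`. -/
noncomputable def polyCauchy (k : ℤ) (n : ℕ) : ℝ :=
  ∑ ℓ ∈ range (n + 1), (-1 : ℝ) ^ (n - ℓ) * stirling1 n ℓ / ((ℓ : ℝ) + 1) ^ k

/-- Poly-Cauchy numbers of the second kind `ĉ_n^{(k)}`. -/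
noncomputable def polyCauchy2 (k : ℤ) (n : ℕ) : ℝ :=
  (-1 : ℝ) ^ n * ∑ ℓ ∈ range (n + 1), (stirling1 n ℓ : ℝ) / ((ℓ : ℝ) + 1) ^ k

/-- Poly-Cauchy polynomials of the first kind `c_n^{(k)}(z)`. -/
noncomputable def polyCauchyPoly (k : ℤ) (n : ℕ) (z : ℝ) : ℝ :=
  ∑ m ∈ range (n + 1), (stirling1 n m : ℝ) * (-1 : ℝ) ^ (n - m) *
    ∑ i ∈ range (m + 1), (m.choose i : ℝ) * z ^ (m - i) / ((i : ℝ) + 1) ^ k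

/-- Shifted poly-Cauchy numbers of the first kind `c_{n,α}^{(k)}`. -/
noncomputable def shiftedPolyCauchy (k : ℤ) (n : ℕ) (α : ℝ) : ℝ :=
  ∑ m ∈ range (n + 1), (stirling1 n m : ℝ) * (-1 : ℝ) ^ (n - m) / ((m : ℝ) + α) ^ k

/-- Shifted poly-Cauchy numbers of the second kind `ĉ_{n,α}^{(k)}`. -/
noncomputable def shiftedPolyCauchy2 (k : ℤ) (n : ℕ) (α : ℝ) : ℝ :=
  (-1 : ℝ) ^ n * ∑ m ∈ range (n + 1), (stirling1 n m : ℝ) / ((m : ℝ) + α) ^ k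


/-!
Write `F(n, m) = ∑ₖ (-1)^(n-k) s_r(n,k) S_r(k,m)` (`rStirlingConv r n m` below). The vertical
recurrences `s_r(n+1,k) = n s_r(n,k) + s_r(n,k-1)` and `S_r(k+1,m) = m S_r(k,m) + S_r(k,m-1)` give
`F(n+1, m) = (m - n) F(n, m) + F(n, m-1)`, and `F(r, m) = δ_{m,r}`. Since `δ_{m,n}` satisfies the
same recurrence, induction on `n ≥ r` gives `F(n, m) = δ_{m,n}`.
-/

section RStirling

variable {r n : ℕ}

theorem rStirling1_eq_zero_of_lt_r (n : ℕ) {k : ℕ} (h : k < r) : rStirling1 r n k = 0 := by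
  induction n generalizing k with
  | zero => simp only [rStirling1]; rw [if_neg]; omega
  | succ n ih =>
    cases k with
    | zero => rw [rStirling1]; split_ifs <;> first | rfl | omega | simp [ih h]
    | succ k =>
      rw [rStirling1]; split_ifs <;> first | rfl | omega | simp [ih h, ih (k := k) (by omega)]

theorem rStirling1_eq_zero_of_lt {k : ℕ} (h : n < k) : rStirling1 r n k = 0 := by
  induction n generalizing k with
  | zero => simp only [rStirling1]; rw [if_neg]; omega
  | succ n ih =>
    obtain ⟨k, rfl⟩ : ∃ j, k = j + 1 := ⟨k - 1, by omega⟩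
    rw [rStirling1]
    split_ifs <;> first | rfl | omega | simp [ih (k := k + 1) (by omega), ih (k := k) (by omega)]

theorem rStirling1_self (r m : ℕ) : rStirling1 r r m = if m = r then 1 else 0 := by
  cases r <;> simp [rStirling1]

theorem rStirling2_self (r m : ℕ) : rStirling2 r r m = if m = r then 1 else 0 := by
  cases r <;> simp [rStirling2]

theorem rStirling1_succ_zero (h : r ≤ n) : rStirling1 r (n + 1) 0 = n * rStirling1 r n 0 := by
  rw [rStirling1, if_neg (by omega), if_neg (by omega), add_zero]

theorem rStirling1_succ_succ (h : r ≤ n) (k : ℕ) :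
    rStirling1 r (n + 1) (k + 1) = n * rStirling1 r n (k + 1) + rStirling1 r n k := by
  rw [rStirling1, if_neg (by omega), if_neg (by omega)]

theorem rStirling2_succ_zero (h : r ≤ n) : rStirling2 r (n + 1) 0 = 0 := by
  rw [rStirling2, if_neg (by omega), if_neg (by omega), zero_mul, add_zero]

theorem rStirling2_succ_succ (h : r ≤ n) (m : ℕ) :
    rStirling2 r (n + 1) (m + 1) = (m + 1) * rStirling2 r n (m + 1) + rStirling2 r n m := by
  rw [rStirling2, if_neg (by omega), if_neg (by omega)]

/-- The recurrence of `S_r(k+1, ·)` only holds for `k ≥ r`; the factor `s_r(n,k)`, which vanishes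
for `k < r`, makes it hold for every `k`. -/
theorem rStirling1_mul_rStirling2_succ_zero (n k : ℕ) :
    rStirling1 r n k * rStirling2 r (k + 1) 0 = 0 := by
  rcases lt_or_ge k r with hk | hk
  · rw [rStirling1_eq_zero_of_lt_r n hk, zero_mul]
  · rw [rStirling2_succ_zero hk, mul_zero]

theorem rStirling1_mul_rStirling2_succ_succ (n k m : ℕ) :
    rStirling1 r n k * rStirling2 r (k + 1) (m + 1) =
      rStirling1 r n k * ((m + 1) * rStirling2 r k (m + 1) + rStirling2 r k m) := by
  rcases lt_or_ge k r with hk | hk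
  · simp only [rStirling1_eq_zero_of_lt_r n hk, zero_mul]
  · rw [rStirling2_succ_succ hk]

def rStirlingConv (r n m : ℕ) : ℤ :=
  ∑ k ∈ range (n + 1), (-1 : ℤ) ^ (n - k) * (rStirling1 r n k : ℤ) * (rStirling2 r k m : ℤ)

theorem rStirlingConv_self (r m : ℕ) : rStirlingConv r r m = if m = r then 1 else 0 := by
  rw [rStirlingConv, sum_eq_single_of_mem r (self_mem_range_succ r)]
  · simp [rStirling1_self, rStirling2_self]
  · intro k _ hk
    simp [rStirling1_self, hk]

theorem rStirlingConv_eq_neg_sum (n m : ℕ) :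
    rStirlingConv r n m = -∑ k ∈ range (n + 2),
      (-1 : ℤ) ^ (n + 1 - k) * (rStirling1 r n k : ℤ) * (rStirling2 r k m : ℤ) := by
  rw [sum_range_succ, rStirling1_eq_zero_of_lt (Nat.lt_succ_self n), Nat.cast_zero, mul_zero,
    zero_mul, add_zero, rStirlingConv, ← sum_neg_distrib]
  refine sum_congr rfl fun k hk => ?_
  rw [show n + 1 - k = n - k + 1 by grind, pow_succ]
  ring

theorem rStirlingConv_succ (h : r ≤ n) (m : ℕ) :
    rStirlingConv r (n + 1) m = -n * rStirlingConv r n m +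
      ∑ k ∈ range (n + 1), (-1 : ℤ) ^ (n - k) * (rStirling1 r n k : ℤ) *
        (rStirling2 r (k + 1) m : ℤ) := by
  rw [rStirlingConv_eq_neg_sum n m, neg_mul_neg, mul_sum, rStirlingConv, sum_range_succ',
    sum_range_succ' _ (n + 1), add_right_comm, ← sum_add_distrib, rStirling1_succ_zero h]
  congr 1
  · refine sum_congr rfl fun k _ => ?_
    rw [rStirling1_succ_succ h, Nat.add_sub_add_right]
    push_cast
    ring
  · push_cast
    ring

theorem rStirlingConv_succ_zero (h : r ≤ n) :
    rStirlingConv r (n + 1) 0 = -n * rStirlingConv r n 0 := by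
  rw [rStirlingConv_succ h, add_eq_left]
  refine sum_eq_zero fun k _ => ?_
  rw [mul_assoc, ← Nat.cast_mul, rStirling1_mul_rStirling2_succ_zero, Nat.cast_zero, mul_zero]

theorem rStirlingConv_succ_succ (h : r ≤ n) (m : ℕ) :
    rStirlingConv r (n + 1) (m + 1) =
      ((m : ℤ) + 1 - n) * rStirlingConv r n (m + 1) + rStirlingConv r n m := by
  have hterm : ∀ k, (-1 : ℤ) ^ (n - k) * (rStirling1 r n k : ℤ) * (rStirling2 r (k + 1) (m + 1) : ℤ)
      = ((m : ℤ) + 1) * ((-1 : ℤ) ^ (n - k) * rStirling1 r n k * rStirling2 r k (m + 1)) +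
        (-1 : ℤ) ^ (n - k) * rStirling1 r n k * rStirling2 r k m := fun k => by
    rw [mul_assoc, ← Nat.cast_mul, rStirling1_mul_rStirling2_succ_succ]
    push_cast
    ring
  rw [rStirlingConv_succ h, sum_congr rfl fun k _ => hterm k, sum_add_distrib, ← mul_sum]
  unfold rStirlingConv
  ring

end RStirling

theorem stmt11 (n r m : ℕ) (hn : r ≤ n) :
    ∑ k ∈ Finset.range (n + 1),
        (-1 : ℤ) ^ (n - k) * (rStirling1 r n k : ℤ) * (rStirling2 r k m : ℤ) =
      if m = n then 1 else 0 := by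
  change rStirlingConv r n m = _
  induction n, hn using Nat.le_induction generalizing m with
  | base => exact rStirlingConv_self r m
  | succ n hn ih =>
    cases m with
    | zero => rw [rStirlingConv_succ_zero hn, ih]; split_ifs <;> simp_all
    | succ m =>
      rw [rStirlingConv_succ_succ hn, ih, ih]
      split_ifs <;> omega
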